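/- There exists a Z-group G such that ⋂_{n>0} nG ≠ {0} and yet G is rigid, i.e., the only order-preserving group automorphism of G fixing 1 is the identity. -/

import Mathlib

/-!
Let `α` be transcendental and let `G ⊆ ℝ ×ₗ ℚ` consist of the pairs `(a + b α, s)` with
`a, b ∈ ℚ`, `s` dyadic and `a - s` of odd denominator. Writing `a / n` as a dyadic plus an
odd-denominator rational shows that `G` is a Z-group with least positive element `(0, 1)`, and
`(α, 0)` is divisible by every `n`.

An order-preserving endomorphism `f` of `G` induces an order-preserving endomorphism of the
archimedean quotient `G / ℤ (0, 1) ≅ ℚ + ℚ α ⊆ ℝ`, hence multiplication by some `c ≥ 0`. Since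
`c` and `c α` lie in `ℚ + ℚ α`, `c` is rational. Dividing `(1, 1)` by powers of `2` forces `c`
to be dyadic, dividing `(1, 0)` by powers of `3` forces `c` to have odd denominator, so
`c ∈ ℤ`; applied to `f⁻¹` as well this gives `c = 1`. Then `f - id` takes values in `ℤ (0, 1)`
and kills `(0, 1)`, so it vanishes because every element of a Z-group is `n`-divisible
modulo `ℤ (0, 1)`.
-/

/-- A Z-group: a linearly ordered abelian group with a least positive element `one`
such that every element is congruent to an integer multiple of `one` modulo `n`,
for every integer `n > 0`. -/
structure ZGroup where
  carrier : Type
  [grp : AddCommGroup carrier]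
  [lin : LinearOrder carrier]
  [ord : IsOrderedAddMonoid carrier]
  one : carrier
  one_pos : 0 < one
  one_least : ∀ x : carrier, 0 < x → one ≤ x
  div : ∀ g : carrier, ∀ n : ℤ, 0 < n → ∃ h : carrier, ∃ k : ℤ, g = n • h + k • one

attribute [instance] ZGroup.grp
attribute [instance] ZGroup.lin
attribute [instance] ZGroup.ord

namespace Rat

def denSubring (M : Submonoid ℕ) (hM : ∀ {a b : ℕ}, a ∣ b → b ∈ M → a ∈ M) :
    Subring ℚ where
  carrier := {q | q.den ∈ M}
  zero_mem' := by simp [M.one_mem]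
  one_mem' := by simp [M.one_mem]
  add_mem' ha hb := hM (add_den_dvd _ _) (M.mul_mem ha hb)
  mul_mem' ha hb := hM (mul_den_dvd _ _) (M.mul_mem ha hb)
  neg_mem' := by simp

def dyadic : Subring ℚ :=
  denSubring (Submonoid.powers 2) fun hab ⟨k, hk⟩ => by
    obtain ⟨j, -, rfl⟩ := (Nat.dvd_prime_pow Nat.prime_two).1 (hk ▸ hab)
    exact ⟨j, rfl⟩

def oddDen : Subring ℚ :=
  denSubring ⟨⟨{n | Odd n}, fun ha hb => ha.mul hb⟩, odd_one⟩
    fun hab hb => hb.of_dvd_nat hab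

lemma mem_dyadic {q : ℚ} : q ∈ dyadic ↔ ∃ k : ℕ, 2 ^ k = q.den := Iff.rfl

lemma mem_oddDen {q : ℚ} : q ∈ oddDen ↔ Odd q.den := Iff.rfl

lemma inv_two_mem_dyadic : (2 : ℚ)⁻¹ ∈ dyadic := ⟨1, by simp⟩

lemma natCast_inv_mem_oddDen {m : ℕ} (hm : Odd m) : (m : ℚ)⁻¹ ∈ oddDen := by
  rw [mem_oddDen, inv_natCast_den_of_pos hm.pos]
  exact hm

lemma exists_intCast_eq_of_mem_dyadic_of_mem_oddDen {q : ℚ} (hd : q ∈ dyadic)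
    (ho : q ∈ oddDen) : ∃ z : ℤ, (z : ℚ) = q := by
  obtain ⟨k, hk⟩ := mem_dyadic.1 hd
  have : k = 0 := by
    by_contra hk0
    exact Nat.not_even_iff_odd.2 (hk ▸ ho : Odd (2 ^ k)) (Nat.even_pow.2 ⟨even_two, hk0⟩)
  exact ⟨q.num, (den_eq_one_iff q).1 (by simp [← hk, this])⟩

lemma exists_mem_dyadic_add_mem_oddDen_eq (q : ℚ) :
    ∃ u ∈ dyadic, ∃ v ∈ oddDen, u + v = q := by
  obtain ⟨k, m, hm, hden⟩ := Nat.exists_eq_two_pow_mul_odd q.den_ne_zero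
  obtain ⟨a, b, hab⟩ : IsCoprime ((2 : ℤ) ^ k) m := by
    exact_mod_cast Nat.isCoprime_iff_coprime.2 ((Nat.coprime_two_left.2 hm).pow_left k)
  refine ⟨q.num * b * (2 ^ k)⁻¹, ?_, q.num * a * (m : ℚ)⁻¹, ?_, ?_⟩
  · rw [← inv_pow]
    exact mul_mem (mul_mem (intCast_mem _ _) (intCast_mem _ _)) (pow_mem inv_two_mem_dyadic k)
  · exact mul_mem (mul_mem (intCast_mem _ _) (intCast_mem _ _)) (natCast_inv_mem_oddDen hm)
  have hab' : (a : ℚ) * 2 ^ k + b * m = 1 := by exact_mod_cast hab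
  have hq : q = q.num / (2 ^ k * m) := by exact_mod_cast (hden ▸ (num_div_den q).symm)
  have hm0 : (m : ℚ) ≠ 0 := by exact_mod_cast hm.pos.ne'
  conv_rhs => rw [hq]
  field_simp
  linear_combination (q.num : ℚ) * hab'

lemma eq_zero_of_forall_not_dvd_den_div_pow {p : ℕ} [Fact p.Prime] {q : ℚ}
    (h : ∀ k : ℕ, ¬ p ∣ (q / p ^ k).den) : q = 0 := by
  by_contra hq
  have hp : p.Prime := Fact.out
  set k := (padicValRat p q).toNat + 1
  have hval : padicValRat p (q / p ^ k) = padicValRat p q - k := by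
    rw [padicValRat.div hq (pow_ne_zero _ (by exact_mod_cast hp.ne_zero)), padicValRat.pow,
      padicValRat.self hp.one_lt]
    ring
  have hnonneg : 0 ≤ padicValRat p (q / p ^ k) := by
    rw [padicValRat_def, padicValNat.eq_zero_of_not_dvd (h k)]
    simp
  omega

end Rat

theorem AddMonoidHom.eq_mul_of_pos_imp_nonneg {G : Type*} [AddCommGroup G] (φ ψ : G →+ ℝ)
    (h : ∀ z, 0 < φ z → 0 ≤ ψ z) {u : G} (hu : φ u = 1) (x : G) : ψ x = ψ u * φ x := by
  have hψu : 0 ≤ ψ u := h u (by rw [hu]; exact one_pos)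
  suffices le : ∀ x, ψ x ≤ ψ u * φ x by
    have := le (-x)
    rw [map_neg, map_neg] at this
    exact le_antisymm (le x) (by linarith)
  intro x
  by_contra! hlt
  -- a rational `q` slightly above `φ x` with `q * ψ u < ψ x`; then `q.num • u - q.den • x`
  -- has positive `φ`-value and negative `ψ`-value
  set δ := (ψ x - ψ u * φ x) / (ψ u + 1)
  have hδ : 0 < δ := div_pos (by linarith) (by linarith)
  obtain ⟨q, hq₁, hq₂⟩ := exists_rat_btwn (lt_add_of_pos_right (φ x) hδ)
  have hqψ : q * ψ u < ψ x := by
    have : δ * (ψ u + 1) = ψ x - ψ u * φ x := div_mul_cancel₀ _ (by linarith)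
    nlinarith
  have hnum : (q.num : ℝ) = q * q.den := by exact_mod_cast (Rat.mul_den_eq_num q).symm
  have hden : (0 : ℝ) < q.den := by exact_mod_cast q.den_pos
  have := h (q.num • u - (q.den : ℤ) • x) (by
    simp only [map_sub, map_zsmul, zsmul_eq_mul, hu, hnum]
    push_cast
    nlinarith)
  simp only [map_sub, map_zsmul, zsmul_eq_mul, hnum] at this
  push_cast at this
  nlinarith

theorem ZGroup.map_eq_zero_of_map_one_eq_zero {Z : ZGroup} (d : Z.carrier →+ Z.carrier)
    (hd : ∀ x, ∃ k : ℤ, d x = k • Z.one) (h1 : d Z.one = 0) (x : Z.carrier) : d x = 0 := by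
  obtain ⟨k, hk⟩ := hd x
  -- writing `x = n • y + j • 1` gives `d x = n • d y`
  suffices ∀ n : ℤ, 0 < n → n ∣ k by
    rw [hk, Int.eq_zero_of_dvd_of_natAbs_lt_natAbs (this (k.natAbs + 1) (by omega)) (by omega),
      zero_zsmul]
  intro n hn
  obtain ⟨y, j, hy⟩ := Z.div x n hn
  obtain ⟨m, hm⟩ := hd y
  refine ⟨m, (zsmul_left_strictMono Z.one_pos).injective ?_⟩
  rw [← hk, hy, map_add, map_zsmul, map_zsmul, h1, hm, smul_zero, add_zero, mul_smul]

theorem Irrational.eq_zero_of_add_mul_eq_ratCast {α : ℝ} (hα : Irrational α) {a b c : ℚ}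
    (h : a + b * α = c) : b = 0 := by
  by_contra hb
  exact hα ⟨(c - a) / b, by push_cast; field_simp; linarith⟩

theorem Transcendental.eq_zero_of_add_mul_add_mul_sq {α : ℝ} (hα : Transcendental ℚ α)
    {a b c : ℚ} (h : a + b * α + c * α ^ 2 = 0) : c = 0 := by
  open Polynomial in
  have hp := transcendental_iff.1 hα (C a + C b * X + C c * X ^ 2) (by simpa using h)
  simpa using congrArg (coeff · 2) hp

namespace RigidZGroup

open Rat

variable (α : ℝ)

def subgroup : AddSubgroup (ℝ ×ₗ ℚ) where
  carrier := {x | ∃ a b : ℚ, (ofLex x).1 = a + b * α ∧ (ofLex x).2 ∈ dyadic ∧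
    a - (ofLex x).2 ∈ oddDen}
  zero_mem' := ⟨0, 0, by simp, zero_mem _, by simp⟩
  add_mem' := by
    rintro x y ⟨a, b, hx, hxd, hxo⟩ ⟨a', b', hy, hyd, hyo⟩
    refine ⟨a + a', b + b', ?_, add_mem hxd hyd, ?_⟩
    · simp only [ofLex_add, Prod.fst_add, hx, hy]
      push_cast
      ring
    · simpa only [ofLex_add, Prod.snd_add, add_sub_add_comm] using add_mem hxo hyo
  neg_mem' := by
    rintro x ⟨a, b, hx, hxd, hxo⟩
    refine ⟨-a, -b, ?_, neg_mem hxd, ?_⟩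
    · simp only [ofLex_neg, Prod.fst_neg, hx]
      push_cast
      ring
    · simpa only [ofLex_neg, Prod.snd_neg, neg_sub_neg, neg_sub] using neg_mem hxo

variable {α}

def fst : subgroup α →+ ℝ where
  toFun x := (ofLex x.1).1
  map_zero' := rfl
  map_add' _ _ := rfl

def snd : subgroup α →+ ℚ where
  toFun x := (ofLex x.1).2
  map_zero' := rfl
  map_add' _ _ := rfl

@[ext]
theorem ext {x y : subgroup α} (h₁ : fst x = fst y) (h₂ : snd x = snd y) : x = y :=
  Subtype.ext (ofLex.injective (Prod.ext h₁ h₂))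

def mk (a b s : ℚ) (hs : s ∈ dyadic) (has : a - s ∈ oddDen) : subgroup α :=
  ⟨toLex (a + b * α, s), a, b, rfl, hs, has⟩

@[simp]
theorem fst_mk (a b s : ℚ) (hs : s ∈ dyadic) (has : a - s ∈ oddDen) :
    fst (mk (α := α) a b s hs has) = a + b * α := rfl

@[simp]
theorem snd_mk (a b s : ℚ) (hs : s ∈ dyadic) (has : a - s ∈ oddDen) :
    snd (mk (α := α) a b s hs has) = s := rfl

theorem exists_fst_eq_and_sub_snd_mem (x : subgroup α) :
    ∃ a b : ℚ, fst x = a + b * α ∧ a - snd x ∈ oddDen :=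
  let ⟨a, b, h, _, h'⟩ := x.2; ⟨a, b, h, h'⟩

theorem snd_mem_dyadic (x : subgroup α) : snd x ∈ dyadic :=
  let ⟨_, _, _, h, _⟩ := x.2; h

theorem sub_snd_mem_oddDen (hα : Irrational α) {x : subgroup α} {r : ℚ} (hx : fst x = r) :
    r - snd x ∈ oddDen := by
  obtain ⟨a, b, h, has⟩ := exists_fst_eq_and_sub_snd_mem x
  have hb := hα.eq_zero_of_add_mul_eq_ratCast (h.symm.trans hx)
  rw [hb] at h
  have : a = r := by exact_mod_cast (by simpa using h.symm.trans hx : (a : ℝ) = r)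
  rwa [← this]

theorem snd_eq_div_of_zsmul_eq {x y : subgroup α} {n : ℤ} (hn : n ≠ 0) (h : n • y = x) :
    snd y = snd x / n := by
  rw [← h, map_zsmul, zsmul_eq_mul, mul_div_cancel_left₀ _ (by exact_mod_cast hn)]

theorem lt_of_fst_lt {x y : subgroup α} (h : fst x < fst y) : x < y :=
  Prod.Lex.lt_iff.2 (Or.inl h)

theorem fst_monotone : Monotone (fst : subgroup α → ℝ) :=
  fun _ _ h => Prod.Lex.monotone_fst _ _ h

def one : subgroup α := mk 0 0 1 (one_mem _) (by simp)

@[simp]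
theorem fst_one : fst (one : subgroup α) = 0 := by simp [one]

@[simp]
theorem snd_one : snd (one : subgroup α) = 1 := by simp [one]

theorem one_pos : (0 : subgroup α) < one := by
  refine Prod.Lex.lt_iff.2 (Or.inr ⟨fst_one.symm, ?_⟩)
  change snd (0 : subgroup α) < snd (one : subgroup α)
  simp

theorem exists_eq_zsmul_one_of_fst_eq_zero (hα : Irrational α) {x : subgroup α}
    (hx : fst x = 0) : ∃ k : ℤ, x = k • one := by
  have ho : snd x ∈ oddDen := by
    simpa using neg_mem (sub_snd_mem_oddDen hα (r := 0) (by simpa using hx))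
  obtain ⟨k, hk⟩ := exists_intCast_eq_of_mem_dyadic_of_mem_oddDen (snd_mem_dyadic x) ho
  exact ⟨k, ext (by simp [hx]) (by simp [hk])⟩

theorem one_le_of_pos (hα : Irrational α) {x : subgroup α} (hx : 0 < x) : one ≤ x := by
  rcases (fst_monotone hx.le).lt_or_eq with h | h
  · exact (lt_of_fst_lt (by simpa using h)).le
  · obtain ⟨k, rfl⟩ := exists_eq_zsmul_one_of_fst_eq_zero hα (by simpa using h.symm)
    have hk : 0 < k := by
      simpa using (zsmul_left_strictMono (one_pos (α := α))).lt_iff_lt.1 (by simpa using hx)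
    simpa using (zsmul_left_strictMono (one_pos (α := α))).monotone (show 1 ≤ k by omega)

theorem exists_eq_zsmul_add_zsmul_one (g : subgroup α) (n : ℤ) (hn : 0 < n) :
    ∃ h : subgroup α, ∃ k : ℤ, g = n • h + k • one := by
  obtain ⟨a, b, hg, hgo⟩ := exists_fst_eq_and_sub_snd_mem g
  obtain ⟨σ, hσ, τ, hτ, hστ⟩ := exists_mem_dyadic_add_mem_oddDen_eq (a / n)
  have hn' : (n : ℚ) ≠ 0 := by exact_mod_cast hn.ne'
  have hk : snd g - n * σ ∈ oddDen := by
    have : snd g - n * σ = -(a - snd g) + n * τ := by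
      have ha : a = n * (σ + τ) := by rw [hστ]; field_simp
      linear_combination ha
    rw [this]
    exact add_mem (neg_mem hgo) (mul_mem (intCast_mem _ n) hτ)
  obtain ⟨k, hk⟩ := exists_intCast_eq_of_mem_dyadic_of_mem_oddDen
    (sub_mem (snd_mem_dyadic g) (mul_mem (intCast_mem _ n) hσ)) hk
  refine ⟨mk (a / n) (b / n) σ hσ (by rwa [← hστ, add_sub_cancel_left]), k, ext ?_ ?_⟩
  · simp only [map_add, map_zsmul, zsmul_eq_mul, fst_mk, fst_one, hg, mul_zero, add_zero]
    push_cast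
    field_simp
  · simp only [map_add, map_zsmul, zsmul_eq_mul, snd_mk, snd_one, hk]
    ring

noncomputable def zgroup (hα : Irrational α) : ZGroup :=
  ⟨subgroup α, one, one_pos, fun _ => one_le_of_pos hα, exists_eq_zsmul_add_zsmul_one⟩

def alpha : subgroup α := mk 0 1 0 (zero_mem _) (by simp)

@[simp]
theorem fst_alpha : fst (alpha : subgroup α) = α := by simp [alpha]

theorem exists_ne_zero_forall_eq_zsmul (hα : Irrational α) :
    ∃ g : subgroup α, g ≠ 0 ∧ ∀ n : ℤ, 0 < n → ∃ h : subgroup α, g = n • h := by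
  refine ⟨alpha, fun h => hα.ne_zero ?_, fun n hn => ?_⟩
  · simpa using congrArg fst h
  · refine ⟨mk 0 (1 / n) 0 (zero_mem _) (by simp), ext ?_ (by simp [alpha])⟩
    have : (n : ℝ) ≠ 0 := by exact_mod_cast hn.ne'
    rw [fst_alpha, map_zsmul, zsmul_eq_mul, fst_mk]
    push_cast
    field_simp
    ring

section Rigidity

variable {f : subgroup α →+ subgroup α}

def realOne : subgroup α := mk 1 0 0 (zero_mem _) (by simp)

@[simp]
theorem fst_realOne : fst (realOne : subgroup α) = 1 := by simp [realOne]

theorem exists_fst_map_eq_mul_of_monotone (hf : Monotone f) :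
    ∃ c : ℝ, 0 ≤ c ∧ ∀ x, fst (f x) = c * fst x := by
  have h : ∀ z, 0 < fst z → 0 ≤ fst (f z) := fun z hz => by
    simpa using fst_monotone (hf (lt_of_fst_lt (x := 0) (by simpa using hz)).le)
  exact ⟨fst (f realOne), h realOne (by simp), fun x => by
    simpa using AddMonoidHom.eq_mul_of_pos_imp_nonneg fst (fst.comp f) h fst_realOne x⟩

theorem exists_ratCast_of_fst_map_eq_mul (hα : Transcendental ℚ α) {c : ℝ}
    (hc : ∀ x, fst (f x) = c * fst x) : ∃ r : ℚ, c = r := by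
  obtain ⟨a, b, hab, -⟩ := exists_fst_eq_and_sub_snd_mem (f realOne)
  obtain ⟨a', b', hab', -⟩ := exists_fst_eq_and_sub_snd_mem (f alpha)
  have hcu : c = a + b * α := by rw [← hab, hc, fst_realOne, mul_one]
  have hcα : c * α = a' + b' * α := by rw [← hab', hc, fst_alpha]
  have hb : b = 0 := hα.eq_zero_of_add_mul_add_mul_sq (a := -a') (b := a - b') <| by
    push_cast
    linear_combination hcα - α * hcu
  exact ⟨a, by simpa [hb] using hcu⟩

theorem mem_dyadic_of_fst_map_eq_mul (hα : Irrational α) {c : ℚ}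
    (hc : ∀ x, fst (f x) = c * fst x) : c ∈ dyadic := by
  let w : subgroup α := mk 1 0 1 (one_mem _) (by simp)
  suffices c - snd (f w) = 0 from sub_eq_zero.1 this ▸ snd_mem_dyadic _
  refine eq_zero_of_forall_not_dvd_den_div_pow (p := 2) fun k => ?_
  let e : subgroup α := mk (2 ^ k)⁻¹ 0 (2 ^ k)⁻¹
    (by rw [← inv_pow]; exact pow_mem inv_two_mem_dyadic k) (by simp)
  have he : ((2 : ℤ) ^ k) • f e = f w := by
    rw [← map_zsmul]
    congr 1
    ext <;> simp [e, w]
  have hsnd := snd_eq_div_of_zsmul_eq (pow_ne_zero k two_ne_zero) he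
  have := sub_snd_mem_oddDen hα (x := f e) (r := c / 2 ^ k)
    (by simp [hc, e, div_eq_mul_inv])
  push_cast at hsnd
  rw [hsnd, ← sub_div] at this
  exact Odd.not_two_dvd_nat (by simpa using mem_oddDen.1 this)

theorem mem_oddDen_of_fst_map_eq_mul (hα : Irrational α) {c : ℚ}
    (hc : ∀ x, fst (f x) = c * fst x) : c ∈ oddDen := by
  have hv : snd (f realOne) = 0 := by
    refine eq_zero_of_forall_not_dvd_den_div_pow (p := 3) fun k => ?_
    let o : subgroup α := mk (3 ^ k)⁻¹ 0 0 (zero_mem _) (by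
      rw [sub_zero, ← inv_pow]
      exact pow_mem (natCast_inv_mem_oddDen (m := 3) (by decide)) k)
    have ho : ((3 : ℤ) ^ k) • f o = f realOne := by
      rw [← map_zsmul]
      congr 1
      ext <;> simp [o, realOne]
    have hsnd := snd_eq_div_of_zsmul_eq (pow_ne_zero k three_ne_zero) ho
    push_cast at hsnd
    obtain ⟨j, hj⟩ := mem_dyadic.1 (snd_mem_dyadic (f o))
    rw [Nat.cast_ofNat, ← hsnd, ← hj]
    exact fun h => by simpa using Nat.prime_three.dvd_of_dvd_pow h
  simpa [hv] using sub_snd_mem_oddDen hα (x := f realOne) (r := c) (by simp [hc])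

theorem exists_int_fst_map_eq_mul_of_monotone (hα : Transcendental ℚ α) (hf : Monotone f) :
    ∃ c : ℤ, 0 ≤ c ∧ ∀ x, fst (f x) = c * fst x := by
  obtain ⟨c, hc₀, hc⟩ := exists_fst_map_eq_mul_of_monotone hf
  obtain ⟨r, rfl⟩ := exists_ratCast_of_fst_map_eq_mul hα hc
  obtain ⟨z, rfl⟩ := exists_intCast_eq_of_mem_dyadic_of_mem_oddDen
    (mem_dyadic_of_fst_map_eq_mul hα.irrational hc)
    (mem_oddDen_of_fst_map_eq_mul hα.irrational hc)
  exact ⟨z, by exact_mod_cast hc₀, by simpa using hc⟩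

end Rigidity

theorem eq_of_monotone_of_map_one (hα : Transcendental ℚ α) (f : subgroup α ≃+ subgroup α)
    (hf : Monotone f) (h₁ : f one = one) (x : subgroup α) : f x = x := by
  have hf' : Monotone f.symm := fun a b h =>
    (hf.strictMono_of_injective f.injective).le_iff_le.1 (by simpa using h)
  obtain ⟨c, hc₀, hc⟩ := exists_int_fst_map_eq_mul_of_monotone hα (f := f.toAddMonoidHom) hf
  obtain ⟨c', -, hc'⟩ :=
    exists_int_fst_map_eq_mul_of_monotone hα (f := f.symm.toAddMonoidHom) hf'
  simp only [AddEquiv.coe_toAddMonoidHom] at hc hc'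
  have hcc' : c * c' = 1 := by
    have := hc (f.symm realOne)
    rw [AddEquiv.apply_symm_apply, hc', fst_realOne] at this
    exact_mod_cast (by linarith : (c : ℝ) * c' = 1)
  have hc₁ : c = 1 := Int.eq_one_of_mul_eq_one_right hc₀ hcc'
  let d := f.toAddMonoidHom - AddMonoidHom.id _
  have hd : ∀ y, ∃ k : ℤ, d y = k • one := fun y =>
    exists_eq_zsmul_one_of_fst_eq_zero hα.irrational (by simp [d, hc, hc₁])
  exact sub_eq_zero.1 <|
    ZGroup.map_eq_zero_of_map_one_eq_zero (Z := zgroup hα.irrational) d hd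
      (by change d one = 0; simp [d, h₁]) x

end RigidZGroup

/-- There exists a non-Leibnizian rigid Z-group: a Z-group `G` with
`⋂_{n>0} nG ≠ 0` whose only order-preserving automorphism fixing `1` is the
identity. -/
theorem exists_nonleibnizian_rigid_zgroup :
    ∃ Z : ZGroup,
      (∃ g : Z.carrier, g ≠ 0 ∧ ∀ n : ℤ, 0 < n → ∃ h : Z.carrier, g = n • h) ∧
      (∀ f : Z.carrier ≃+ Z.carrier, Monotone f → f Z.one = Z.one →
        ∀ x : Z.carrier, f x = x) := by
  have hα : Transcendental ℚ (liouvilleNumber 3) := fun h =>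
    transcendental_liouvilleNumber (by norm_num) ((IsFractionRing.isAlgebraic_iff ℤ ℚ ℝ).2 h)
  exact ⟨RigidZGroup.zgroup hα.irrational,
    RigidZGroup.exists_ne_zero_forall_eq_zsmul hα.irrational,
    RigidZGroup.eq_of_monotone_of_map_one hα⟩
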